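/- Let k ≥ 2, H₁,…,H_k ∈ [1/2,1) with ∑ᵢ Hᵢ > k−2 (vacuous for k ≤ 3), D ⊆ [−R,R]^k bounded, and λ ∈ (0, (2−k+∑ᵢHᵢ) ∧ 1). Then there is a constant C such that for all x, z ∈ D: ‖ |x−·|^{2−k−λ} ‖_{L^{1/H₁,…,1/H_k}(D)} ≤ C, and consequently ‖G(x,·) − G(z,·)‖_{L^{1/H₁,…,1/H_k}(D)} ≤ C|x−z|^λ where G(x,y)=|x−y|^{2−k}. -/

import Mathlib

open MeasureTheory
open scoped BigOperators

/-- The mixed `L^{p₁,…,p_k}` norm, defined recursively: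
`‖h‖ = (∫_{S k} ‖h(·,t)‖_{p₁,…,p_{k-1}}^{p_k} dt)^{1/p_k}`. -/
noncomputable def mixedNorm : (k : ℕ) → (Fin k → ℝ) → (Fin k → Set ℝ) →
    ((Fin k → ℝ) → ℝ) → ℝ
  | 0, _, _, h => |h (fun i => i.elim0)|
  | k + 1, p, S, h =>
      (∫ t in S (Fin.last k),
          (mixedNorm k (fun i => p i.castSucc) (fun i => S i.castSucc)
            (fun η => h (Fin.snoc η t))) ^ p (Fin.last k)) ^ (1 / p (Fin.last k))

/-- The Euclidean norm on `ℝᵏ`. -/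
noncomputable def eucNorm {k : ℕ} (x : Fin k → ℝ) : ℝ := Real.sqrt (∑ i, x i ^ 2)

/-!
Put `γ = k - 2 + λ < ∑ Hᵢ` and split it as `γ = ∑ qᵢ` with `qᵢ = Hᵢ γ / ∑ Hⱼ`. Since
`|vᵢ| ≤ |v|`, the kernel is dominated by a product, `|v|^(-γ) ≤ ∏ |vᵢ|^(-qᵢ)`, and
`qᵢ / Hᵢ < 1` makes each factor `|xᵢ - ·|^(-qᵢ)` lie in `L^{1/Hᵢ}[-R, R]` uniformly in `xᵢ`.
The mixed norm of a function dominated by a product of one-variable functions is at most the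
product of their norms (a slice-by-slice induction), which gives the first bound. For the second,
with `n = k - 2`, `|u^(-n) - v^(-n)| ≤ (n + 1) |u - v|^λ (u^(-n-λ) + v^(-n-λ))` and
`| |x - y| - |z - y| | ≤ |x - z|` reduce the difference `G(x, y) - G(z, y)` to the same kernels.
-/

open Set

theorem abs_indicator_le_abs {α : Type*} (s : Set α) (f : α → ℝ) (a : α) :
    |s.indicator f a| ≤ |f a| := by
  simpa only [Real.norm_eq_abs] using norm_indicator_le_norm_self f a

theorem eucNorm_nonneg {k : ℕ} (x : Fin k → ℝ) : 0 ≤ eucNorm x := Real.sqrt_nonneg _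

theorem eucNorm_eq_norm {k : ℕ} (x : Fin k → ℝ) : eucNorm x = ‖WithLp.toLp 2 x‖ := by
  simp [eucNorm, EuclideanSpace.norm_eq]

theorem abs_apply_le_eucNorm {k : ℕ} (x : Fin k → ℝ) (i : Fin k) : |x i| ≤ eucNorm x := by
  rw [eucNorm_eq_norm]
  exact PiLp.norm_apply_le (WithLp.toLp 2 x) i

theorem abs_eucNorm_sub_eucNorm_le {k : ℕ} (x y : Fin k → ℝ) :
    |eucNorm x - eucNorm y| ≤ eucNorm (x - y) := by
  simpa only [eucNorm_eq_norm, WithLp.toLp_sub] using abs_norm_sub_norm_le _ _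

theorem eucNorm_pos_of_apply_ne_zero {k : ℕ} {v : Fin k → ℝ} (i : Fin k) (hv : v i ≠ 0) :
    0 < eucNorm v :=
  (abs_pos.2 hv).trans_le (abs_apply_le_eucNorm v i)

theorem eucNorm_rpow_neg_sum_le_prod {k : ℕ} {v : Fin k → ℝ} (hv : ∀ i, v i ≠ 0)
    {a : Fin k → ℝ} (ha : ∀ i, 0 ≤ a i) :
    eucNorm v ^ (-∑ i, a i) ≤ ∏ i, |v i| ^ (-a i) := by
  rcases isEmpty_or_nonempty (Fin k) with hk | ⟨⟨i₀⟩⟩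
  · simp
  have hpos := eucNorm_pos_of_apply_ne_zero i₀ (hv i₀)
  rw [← Finset.sum_neg_distrib, Real.rpow_sum_of_pos hpos]
  exact Finset.prod_le_prod (fun i _ => by positivity) fun i _ =>
    Real.rpow_le_rpow_of_nonpos (abs_pos.2 (hv i)) (abs_apply_le_eucNorm v i) (by linarith [ha i])

theorem intervalIntegrable_abs_sub_rpow {r : ℝ} (hr : -1 < r) (a u v : ℝ) :
    IntervalIntegrable (fun t => |a - t| ^ r) volume u v := by
  have hloc : LocallyIntegrable (fun t : ℝ => |t| ^ r) volume :=
    locallyIntegrable_of_norm_le_rpow (α := -r) (C := 1) (by simp)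
      (by simp only [Module.finrank_self, Nat.cast_one]; linarith)
      (Filter.Eventually.of_forall fun t => by
        simp [Real.norm_eq_abs, abs_of_nonneg (Real.rpow_nonneg (abs_nonneg t) r)])
      (continuous_abs.measurable.pow_const r).aestronglyMeasurable
  have hcpt := hloc.integrableOn_isCompact (isCompact_uIcc (a := a - u) (b := a - v))
  simpa using hcpt.intervalIntegrable.comp_sub_left a

theorem integral_abs_rpow {r b c : ℝ} (hr : -1 < r) (hb : b ≤ 0) (hc : 0 ≤ c) :
    ∫ t in b..c, |t| ^ r = ((-b) ^ (r + 1) + c ^ (r + 1)) / (r + 1) := by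
  have hpos : ∀ d, 0 ≤ d → ∫ t in (0:ℝ)..d, |t| ^ r = d ^ (r + 1) / (r + 1) := by
    intro d hd
    rw [intervalIntegral.integral_congr (g := fun t => t ^ r) fun t ht => by
      rw [uIcc_of_le hd] at ht; simp only [abs_of_nonneg ht.1], integral_rpow (Or.inl hr),
      Real.zero_rpow (by linarith), sub_zero]
  have hint := intervalIntegrable_abs_sub_rpow hr 0
  rw [← intervalIntegral.integral_add_adjacent_intervals (b := 0) (by simpa using hint b 0)
    (by simpa using hint 0 c), hpos c hc, add_div, ← hpos (-b) (by linarith)]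
  congr 1
  simpa using (intervalIntegral.integral_comp_neg (a := 0) (b := -b) (fun t => |t| ^ r)).symm

theorem integral_Icc_abs_sub_rpow_le {r R a : ℝ} (hr : -1 < r) (ha : |a| ≤ R) :
    ∫ t in Icc (-R) R, |a - t| ^ r ≤ 2 * (2 * R) ^ (r + 1) / (r + 1) := by
  obtain ⟨ha₁, ha₂⟩ := abs_le.1 ha
  rw [integral_Icc_eq_integral_Ioc, ← intervalIntegral.integral_of_le (by linarith),
    intervalIntegral.integral_comp_sub_left (fun t => |t| ^ r),
    integral_abs_rpow hr (by linarith) (by linarith)]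
  have hr1 : 0 < r + 1 := by linarith
  gcongr
  rw [two_mul]
  gcongr <;> linarith

theorem mixedNorm_nonneg : ∀ (k : ℕ) (p : Fin k → ℝ) (S : Fin k → Set ℝ)
    (h : (Fin k → ℝ) → ℝ), 0 ≤ mixedNorm k p S h
  | 0, _, _, _ => abs_nonneg _
  | k + 1, _, _, _ => Real.rpow_nonneg
      (integral_nonneg fun _ => Real.rpow_nonneg (mixedNorm_nonneg k _ _ _) _) _

theorem mixedNorm_le_mul_prod {k : ℕ} {p : Fin k → ℝ} (hp : ∀ i, 0 < p i) {S N : Fin k → Set ℝ}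
    (hN : ∀ i, volume (N i) = 0) {g : Fin k → ℝ → ℝ} (hg : ∀ i t, 0 ≤ g i t)
    (hgp : ∀ i, IntegrableOn (fun t => g i t ^ p i) (S i)) {c : ℝ} (hc : 0 ≤ c)
    {h : (Fin k → ℝ) → ℝ} (hh : ∀ y, (∀ i, y i ∉ N i) → |h y| ≤ c * ∏ i, g i (y i)) :
    mixedNorm k p S h ≤ c * ∏ i, (∫ t in S i, g i t ^ p i) ^ (1 / p i) := by
  induction k generalizing c with
  | zero => simpa [mixedNorm] using hh _ finZeroElim
  | succ k ih =>
    set l := Fin.last k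
    set P := ∏ i : Fin k, (∫ t in S i.castSucc, g i.castSucc t ^ p i.castSucc) ^ (1 / p i.castSucc)
    have hP : 0 ≤ P := Finset.prod_nonneg fun i _ =>
      Real.rpow_nonneg (integral_nonneg fun t => Real.rpow_nonneg (hg _ t) _) _
    have hslice : ∀ t ∉ N l, mixedNorm k (fun i => p i.castSucc) (fun i => S i.castSucc)
        (fun η => h (Fin.snoc η t)) ≤ c * g l t * P := by
      intro t ht
      refine ih (fun i => hp _) (fun i => hN i.castSucc) (fun i => hg _) (fun i => hgp _)
        (mul_nonneg hc (hg l t)) fun η hη => ?_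
      have hy : ∀ i, (Fin.snoc η t : Fin (k + 1) → ℝ) i ∉ N i :=
        Fin.lastCases (by simpa using ht) fun i => by simpa using hη i
      simpa [Fin.prod_univ_castSucc, mul_comm, mul_assoc, mul_left_comm] using
        hh (Fin.snoc η t) hy
    have hpl := hp l
    have hint : ∫ t in S l, mixedNorm k (fun i => p i.castSucc) (fun i => S i.castSucc)
        (fun η => h (Fin.snoc η t)) ^ p l ≤ (c * P) ^ p l * ∫ t in S l, g l t ^ p l := by
      rw [← integral_const_mul]
      refine integral_mono_of_nonneg
        (Filter.Eventually.of_forall fun t => Real.rpow_nonneg (mixedNorm_nonneg _ _ _ _) _)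
        ((hgp l).const_mul _) ?_
      filter_upwards [ae_restrict_of_ae (measure_eq_zero_iff_ae_notMem.1 (hN l))] with t ht
      calc _ ≤ (c * g l t * P) ^ p l :=
            Real.rpow_le_rpow (mixedNorm_nonneg _ _ _ _) (hslice t ht) hpl.le
        _ = (c * P) ^ p l * g l t ^ p l := by
            rw [mul_right_comm, Real.mul_rpow (by positivity) (hg l t)]
    calc mixedNorm (k + 1) p S h
        ≤ ((c * P) ^ p l * ∫ t in S l, g l t ^ p l) ^ (1 / p l) :=
          Real.rpow_le_rpow (integral_nonneg fun t => Real.rpow_nonneg (mixedNorm_nonneg _ _ _ _) _)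
            hint (by positivity)
      _ = c * P * (∫ t in S l, g l t ^ p l) ^ (1 / p l) := by
          rw [Real.mul_rpow (by positivity) (integral_nonneg fun t => Real.rpow_nonneg (hg l t) _),
            one_div, Real.rpow_rpow_inv (by positivity) hpl.ne']
      _ = _ := by rw [Fin.prod_univ_castSucc, mul_assoc]

theorem one_sub_rpow_le {s n : ℝ} (hs₀ : 0 ≤ s) (hs₁ : s ≤ 1) (hn : 0 ≤ n) :
    1 - s ^ n ≤ (n + 1) * (1 - s) := by
  rcases le_total n 1 with hn₁ | hn₁
  · nlinarith [Real.self_le_rpow_of_le_one hs₀ hs₁ hn₁]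
  · have := one_add_mul_self_le_rpow_one_add (s := s - 1) (by linarith) hn₁
    rw [add_sub_cancel] at this
    nlinarith

theorem le_rpow_of_le_one_of_le {a r l : ℝ} (ha₀ : 0 ≤ a) (ha₁ : a ≤ 1) (har : a ≤ r)
    (hl₀ : 0 ≤ l) (hl₁ : l ≤ 1) : a ≤ r ^ l :=
  (Real.self_le_rpow_of_le_one ha₀ ha₁ hl₁).trans (Real.rpow_le_rpow ha₀ har hl₀)

theorem rpow_neg_sub_rpow_neg_le {n l u v : ℝ} (hn : 0 ≤ n) (hl₀ : 0 ≤ l) (hl₁ : l ≤ 1)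
    (hu : 0 < u) (huv : u ≤ v) :
    u ^ (-n) - v ^ (-n) ≤ (n + 1) * (v - u) ^ l * u ^ (-n - l) := by
  have hv : 0 < v := hu.trans_le huv
  have hs : (u / v) ^ n ≤ 1 := Real.rpow_le_one (by positivity) ((div_le_one hv).2 huv) hn
  have hsplit : u ^ (-n) - v ^ (-n) = u ^ (-n) * (1 - (u / v) ^ n) := by
    rw [Real.div_rpow hu.le hv.le, Real.rpow_neg hu.le, Real.rpow_neg hv.le]
    field_simp
  have hfrac : (1 - (u / v) ^ n) / (n + 1) ≤ ((v - u) / u) ^ l := by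
    refine le_rpow_of_le_one_of_le (div_nonneg (by linarith) (by positivity))
      ((div_le_one (by positivity)).2 (by linarith [Real.rpow_nonneg (div_pos hu hv).le n]))
      ?_ hl₀ hl₁
    rw [div_le_iff₀ (by positivity)]
    calc 1 - (u / v) ^ n ≤ (n + 1) * (1 - u / v) :=
          one_sub_rpow_le (by positivity) ((div_le_one hv).2 huv) hn
      _ ≤ (n + 1) * ((v - u) / u) := by
          gcongr
          rw [one_sub_div hv.ne']
          gcongr
      _ = _ := mul_comm _ _
  rw [Real.div_rpow (by linarith) hu.le, div_le_iff₀ (by positivity)] at hfrac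
  calc u ^ (-n) - v ^ (-n) ≤ u ^ (-n) * ((v - u) ^ l / u ^ l * (n + 1)) := by
        rw [hsplit]; gcongr
    _ = (n + 1) * (v - u) ^ l * u ^ (-n - l) := by rw [Real.rpow_sub hu]; ring

theorem abs_rpow_neg_sub_rpow_neg_le {n l u v : ℝ} (hn : 0 ≤ n) (hl₀ : 0 ≤ l) (hl₁ : l ≤ 1)
    (hu : 0 < u) (hv : 0 < v) :
    |u ^ (-n) - v ^ (-n)| ≤ (n + 1) * |u - v| ^ l * (u ^ (-n - l) + v ^ (-n - l)) := by
  wlog huv : u ≤ v generalizing u v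
  · simpa only [abs_sub_comm, add_comm] using this hv hu (le_of_not_ge huv)
  rw [abs_of_nonneg (sub_nonneg.2 (Real.rpow_le_rpow_of_nonpos hu huv (by linarith))),
    abs_sub_comm, abs_of_nonneg (sub_nonneg.2 huv), mul_add]
  exact (rpow_neg_sub_rpow_neg_le hn hl₀ hl₁ hu huv).trans
    (le_add_of_nonneg_right (by positivity))

theorem abs_eucNorm_rpow_neg_sub_le {k : ℕ} {n l : ℝ} (hn : 0 ≤ n) (hl₀ : 0 ≤ l) (hl₁ : l ≤ 1)
    {x y z : Fin k → ℝ} (i : Fin k) (hx : y i ≠ x i) (hz : y i ≠ z i) :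
    |eucNorm (x - y) ^ (-n) - eucNorm (z - y) ^ (-n)| ≤
      (n + 1) * eucNorm (x - z) ^ l *
        (eucNorm (x - y) ^ (-n - l) + eucNorm (z - y) ^ (-n - l)) := by
  refine (abs_rpow_neg_sub_rpow_neg_le hn hl₀ hl₁
    (eucNorm_pos_of_apply_ne_zero i (sub_ne_zero.2 hx.symm))
    (eucNorm_pos_of_apply_ne_zero i (sub_ne_zero.2 hz.symm))).trans ?_
  gcongr
  · exact add_nonneg (Real.rpow_nonneg (eucNorm_nonneg _) _) (Real.rpow_nonneg (eucNorm_nonneg _) _)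
  · simpa using abs_eucNorm_sub_eucNorm_le (x - y) (z - y)

theorem add_rpow_le_two_rpow_mul_add {a b p : ℝ} (ha : 0 ≤ a) (hb : 0 ≤ b) (hp : 0 ≤ p) :
    (a + b) ^ p ≤ 2 ^ p * (a ^ p + b ^ p) := by
  wlog hab : a ≤ b generalizing a b
  · simpa only [add_comm] using this hb ha (le_of_not_ge hab)
  calc (a + b) ^ p ≤ (2 * b) ^ p := Real.rpow_le_rpow (by positivity) (by linarith) hp
    _ = 2 ^ p * b ^ p := Real.mul_rpow zero_le_two hb
    _ ≤ 2 ^ p * (a ^ p + b ^ p) := by gcongr; exact le_add_of_nonneg_left (by positivity)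

theorem exists_integral_add_abs_sub_rpow_le {q p : ℝ} (hp : 0 ≤ p) (hqp : q * p < 1) (R : ℝ) :
    ∃ K, ∀ a b, |a| ≤ R → |b| ≤ R →
      IntegrableOn (fun t => (|a - t| ^ (-q) + |b - t| ^ (-q)) ^ p) (Icc (-R) R) ∧
      (∫ t in Icc (-R) R, (|a - t| ^ (-q) + |b - t| ^ (-q)) ^ p) ^ (1 / p) ≤ K := by
  set r := -(q * p)
  have hr : -1 < r := by linarith
  set B := 2 * (2 * R) ^ (r + 1) / (r + 1)
  refine ⟨(2 ^ p * (B + B)) ^ (1 / p), fun a b ha hb => ?_⟩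
  have hR : -R ≤ R := by linarith [abs_nonneg a, abs_le.1 ha]
  have hint : ∀ c, IntegrableOn (fun t => |c - t| ^ r) (Icc (-R) R) := fun c =>
    (intervalIntegrable_iff_integrableOn_Icc_of_le hR).1 (intervalIntegrable_abs_sub_rpow hr c _ _)
  have hle : ∀ t, (|a - t| ^ (-q) + |b - t| ^ (-q)) ^ p ≤ 2 ^ p * (|a - t| ^ r + |b - t| ^ r) := by
    intro t
    simp only [r, neg_mul_eq_neg_mul, Real.rpow_mul (abs_nonneg _)]
    exact add_rpow_le_two_rpow_mul_add (by positivity) (by positivity) hp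
  have hmaj := ((hint a).add (hint b)).const_mul (2 ^ p)
  have hf : IntegrableOn (fun t => (|a - t| ^ (-q) + |b - t| ^ (-q)) ^ p) (Icc (-R) R) :=
    hmaj.mono' (Measurable.aestronglyMeasurable (by fun_prop)) (Filter.Eventually.of_forall
      fun t => (Real.norm_of_nonneg (by positivity)).trans_le (hle t))
  refine ⟨hf, Real.rpow_le_rpow (integral_nonneg fun t => by positivity) ?_ (by positivity)⟩
  calc ∫ t in Icc (-R) R, (|a - t| ^ (-q) + |b - t| ^ (-q)) ^ p
      ≤ ∫ t in Icc (-R) R, 2 ^ p * (|a - t| ^ r + |b - t| ^ r) := integral_mono hf hmaj hle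
    _ = 2 ^ p * ((∫ t in Icc (-R) R, |a - t| ^ r) + ∫ t in Icc (-R) R, |b - t| ^ r) := by
        rw [integral_const_mul, integral_add (hint a) (hint b)]
    _ ≤ 2 ^ p * (B + B) := by
        gcongr <;> exact integral_Icc_abs_sub_rpow_le hr ‹_›

theorem exists_mixedNorm_le_of_abs_le_riesz {k : ℕ} {H : Fin k → ℝ} (hH : ∀ i, 0 < H i)
    {γ : ℝ} (hγ₀ : 0 ≤ γ) (hγ : γ < ∑ i, H i) (R : ℝ) :
    ∃ K, ∀ x ∈ Set.pi univ (fun _ => Icc (-R) R), ∀ z ∈ Set.pi univ (fun _ => Icc (-R) R),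
      ∀ c, 0 ≤ c → ∀ h : (Fin k → ℝ) → ℝ,
      (∀ y, (∀ i, y i ≠ x i) → (∀ i, y i ≠ z i) →
        |h y| ≤ c * (eucNorm (x - y) ^ (-γ) + eucNorm (z - y) ^ (-γ))) →
      mixedNorm k (fun i => 1 / H i) (fun _ => Icc (-R) R) h ≤ c * K := by
  set s := ∑ i, H i
  have hs : 0 < s := hγ₀.trans_lt hγ
  obtain ⟨i₀, -⟩ := Finset.exists_ne_zero_of_sum_ne_zero hs.ne'
  set q : Fin k → ℝ := fun i => H i / s * γ
  have hqsum : ∑ i, q i = γ := by rw [← Finset.sum_mul, ← Finset.sum_div, div_self hs.ne', one_mul]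
  have hqp : ∀ i, q i * (1 / H i) < 1 := fun i => by
    rwa [show q i * (1 / H i) = γ / s by simp only [q]; field_simp [(hH i).ne'], div_lt_one hs]
  have hq₀ : ∀ i, 0 ≤ q i := fun i => mul_nonneg (div_nonneg (hH i).le hs.le) hγ₀
  choose K hK using fun i => exists_integral_add_abs_sub_rpow_le (one_div_pos.2 (hH i)).le (hqp i) R
  refine ⟨∏ i, K i, fun x hx z hz c hc h hh => ?_⟩
  have hcoord : ∀ w : Fin k → ℝ, w ∈ Set.pi univ (fun _ => Icc (-R) R) → ∀ i, |w i| ≤ R :=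
    fun w hw i => abs_le.2 (hw i trivial)
  have hkernel : ∀ w y : Fin k → ℝ, (∀ i, y i ≠ w i) →
      eucNorm (w - y) ^ (-γ) ≤ ∏ i, |w i - y i| ^ (-q i) := fun w y hy => by
    rw [← hqsum]
    exact eucNorm_rpow_neg_sum_le_prod (fun i => sub_ne_zero.2 (hy i).symm) hq₀
  calc mixedNorm k (fun i => 1 / H i) (fun _ => Icc (-R) R) h
      ≤ c * ∏ i, (∫ t in Icc (-R) R, (|x i - t| ^ (-q i) + |z i - t| ^ (-q i)) ^ (1 / H i))
          ^ (1 / (1 / H i)) := by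
        refine mixedNorm_le_mul_prod (N := fun i => {x i, z i}) (fun i => one_div_pos.2 (hH i))
          (fun i => (toFinite _).measure_zero _) (fun i t => by positivity)
          (fun i => (hK i _ _ (hcoord x hx i) (hcoord z hz i)).1) hc fun y hy => ?_
        simp only [mem_insert_iff, mem_singleton_iff, not_or] at hy
        refine (hh y (fun i => (hy i).1) fun i => (hy i).2).trans (mul_le_mul_of_nonneg_left ?_ hc)
        exact (add_le_add (hkernel x y fun i => (hy i).1) (hkernel z y fun i => (hy i).2)).trans
          (Finset.prod_add_prod_le (Finset.mem_univ i₀) le_rfl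
            (fun j _ _ => le_add_of_nonneg_right (by positivity))
            (fun j _ _ => le_add_of_nonneg_left (by positivity))
            (fun j _ => by positivity) (fun j _ => by positivity))
    _ ≤ c * ∏ i, K i := by
        gcongr with i
        exact (hK i _ _ (hcoord x hx i) (hcoord z hz i)).2

theorem stmt9_general (k : ℕ) (hk : 2 ≤ k) (H : Fin k → ℝ)
    (hH : ∀ i, H i ∈ Set.Ico (1/2 : ℝ) 1)
    (R : ℝ) (D : Set (Fin k → ℝ))
    (hD : D ⊆ Set.pi Set.univ fun _ => Set.Icc (-R) R)
    (lam : ℝ) (hlam : lam ∈ Set.Ioo 0 (min (2 - (k:ℝ) + ∑ i, H i) 1)) :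
    ∃ C : ℝ, ∀ x ∈ D, ∀ z ∈ D,
      mixedNorm k (fun i => 1 / H i) (fun _ => Set.Icc (-R) R)
          (Set.indicator D fun y => eucNorm (x - y) ^ ((2:ℝ) - k - lam)) ≤ C ∧
      mixedNorm k (fun i => 1 / H i) (fun _ => Set.Icc (-R) R)
          (Set.indicator D fun y =>
            eucNorm (x - y) ^ ((2:ℝ) - k) - eucNorm (z - y) ^ ((2:ℝ) - k)) ≤
        C * eucNorm (x - z) ^ lam := by
  obtain ⟨hl₀, hlmin⟩ := hlam
  obtain ⟨hlsum, hl₁⟩ := lt_min_iff.1 hlmin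
  set n : ℝ := k - 2
  have hn : 0 ≤ n := sub_nonneg.2 (by exact_mod_cast hk)
  have hG : (2 : ℝ) - k = -n := by ring
  obtain ⟨K, hK⟩ := exists_mixedNorm_le_of_abs_le_riesz (H := H) (fun i => by linarith [(hH i).1])
    (γ := n + lam) (by positivity) (by linarith) R
  refine ⟨max K ((n + 1) * K), fun x hx z hz => ⟨?_, ?_⟩⟩
  · refine (hK x (hD hx) x (hD hx) 1 zero_le_one _ fun y _ _ => ?_).trans (by simp)
    rw [hG, ← neg_add', one_mul]
    have hxy := Real.rpow_nonneg (eucNorm_nonneg (x - y)) (-(n + lam))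
    refine (abs_indicator_le_abs _ _ _).trans ?_
    rw [abs_of_nonneg hxy]
    exact le_add_of_nonneg_left hxy
  · have hd : 0 ≤ eucNorm (x - z) ^ lam := Real.rpow_nonneg (eucNorm_nonneg _) _
    refine (hK x (hD hx) z (hD hz) ((n + 1) * eucNorm (x - z) ^ lam) (mul_nonneg (by linarith) hd)
      _ fun y hyx hyz => ?_).trans ?_
    · rw [hG, neg_add']
      exact (abs_indicator_le_abs _ _ _).trans
        (abs_eucNorm_rpow_neg_sub_le hn hl₀.le hl₁.le ⟨0, by omega⟩ (hyx _) (hyz _))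
    · rw [mul_right_comm]
      exact mul_le_mul_of_nonneg_right (le_max_right _ _) hd

/-- for `k ≥ 2`, `Hᵢ ∈ [1/2,1)` with `∑ Hᵢ > k-2`, `D ⊆ [-R,R]^k`, and
`λ ∈ (0, (2-k+∑Hᵢ) ∧ 1)`, there is `C` such that for all `x, z ∈ D`:
`‖|x-·|^{2-k-λ}‖_{L^{1/H₁,…,1/H_k}(D)} ≤ C` and
`‖G(x,·)-G(z,·)‖_{L^{1/H₁,…,1/H_k}(D)} ≤ C|x-z|^λ`, where `G(x,y) = |x-y|^{2-k}`. -/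
theorem stmt9 (k : ℕ) (hk : 2 ≤ k) (H : Fin k → ℝ)
    (hH : ∀ i, H i ∈ Set.Ico (1/2 : ℝ) 1) (hsum : (k : ℝ) - 2 < ∑ i, H i)
    (R : ℝ) (hR : 0 < R) (D : Set (Fin k → ℝ))
    (hD : D ⊆ Set.pi Set.univ fun _ => Set.Icc (-R) R)
    (lam : ℝ) (hlam : lam ∈ Set.Ioo 0 (min (2 - (k:ℝ) + ∑ i, H i) 1)) :
    ∃ C : ℝ, ∀ x ∈ D, ∀ z ∈ D,
      mixedNorm k (fun i => 1 / H i) (fun _ => Set.Icc (-R) R)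
          (Set.indicator D fun y => eucNorm (x - y) ^ ((2:ℝ) - k - lam)) ≤ C ∧
      mixedNorm k (fun i => 1 / H i) (fun _ => Set.Icc (-R) R)
          (Set.indicator D fun y =>
            eucNorm (x - y) ^ ((2:ℝ) - k) - eucNorm (z - y) ^ ((2:ℝ) - k)) ≤
        C * eucNorm (x - z) ^ lam :=
  stmt9_general k hk H hH R D hD lam hlam
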